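/- Let n be a natural number, f : ℝⁿ → ℝ convex and differentiable with L-Lipschitz gradient (L > 0), β ≥ 0, and set F(w) = f(w) + β·∑ᵢ|wᵢ|. Suppose w⋆ is a global minimizer of F. Define the ISTA sequence by w_{k+1} = S_{β/L}(w_k − (1/L)∇f(w_k)) from an arbitrary starting point w₀ ∈ ℝⁿ, with soft-thresholding applied coordinatewise. Then for every k ≥ 1, F(w_k) − F(w⋆) ≤ L·‖w₀ − w⋆‖₂²/(2k); in particular F(w_k) converges to the minimum value of F. -/

import Mathlib

/-!
An ISTA step `p = S_{β/L}(y - ∇f(y)/L)` is a proximal-gradient step: coordinatewise, the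
optimality of soft-thresholding says that `L(y - p) - ∇f(y)` is a subgradient of `β‖·‖₁` at `p`.
Together with the descent lemma for `f` at `y` and the first-order convexity inequality this gives,
for every `x`,
  `F(w_{k+1}) ≤ F(x) + L/2 (‖w_k - x‖² - ‖w_{k+1} - x‖²)`.
With `x = w_k` the values `F(w_k)` decrease, and then with `x = w⋆` the quantity
`k (F(w_k) - F(w⋆)) + L/2 ‖w_k - w⋆‖²` never exceeds its initial value `L/2 ‖w₀ - w⋆‖²`.
-/

open Filter

noncomputable def softThreshold (α t : ℝ) : ℝ := Real.sign t * max (|t| - α) 0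

lemma abs_sub_softThreshold_le_and_mul_eq {α : ℝ} (hα : 0 ≤ α) (t : ℝ) :
    |t - softThreshold α t| ≤ α ∧ (t - softThreshold α t) * softThreshold α t =
      α * |softThreshold α t| := by
  unfold softThreshold
  rcases le_or_gt |t| α with h | h
  · simp [h]
  rw [max_eq_left (by linarith)]
  rcases lt_trichotomy t 0 with ht | rfl | ht
  · rw [Real.sign_of_neg ht, abs_of_neg ht] at *
    rw [show -1 * (-t - α) = t + α by ring, abs_of_neg (by linarith : t + α < 0),
      show t - (t + α) = -α by ring, abs_neg, abs_of_nonneg hα]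
    exact ⟨le_rfl, by ring⟩
  · simp at h; linarith
  · rw [Real.sign_of_pos ht, abs_of_pos ht] at *
    rw [show 1 * (t - α) = t - α by ring, abs_of_pos (by linarith : 0 < t - α),
      show t - (t - α) = α by ring, abs_of_nonneg hα]
    exact ⟨le_rfl, by ring⟩

lemma sub_softThreshold_mul_le {α : ℝ} (hα : 0 ≤ α) (t z : ℝ) :
    (t - softThreshold α t) * (z - softThreshold α t) ≤ α * (|z| - |softThreshold α t|) := by
  obtain ⟨hle, heq⟩ := abs_sub_softThreshold_le_and_mul_eq hα t
  have : (t - softThreshold α t) * z ≤ α * |z| :=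
    (le_abs_self _).trans (by rw [abs_mul]; exact mul_le_mul_of_nonneg_right hle (abs_nonneg z))
  linarith [show (t - softThreshold α t) * (z - softThreshold α t) =
    (t - softThreshold α t) * z - (t - softThreshold α t) * softThreshold α t by ring]

lemma inner_sub_softThreshold_le {ι : Type*} [Fintype ι] {α : ℝ} (hα : 0 ≤ α)
    {u p : EuclideanSpace ℝ ι} (hp : ∀ i, p i = softThreshold α (u i)) (z : EuclideanSpace ℝ ι) :
    inner ℝ (u - p) (z - p) ≤ α * (∑ i, |z i| - ∑ i, |p i|) := by
  rw [PiLp.inner_apply, ← Finset.sum_sub_distrib, Finset.mul_sum]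
  refine Finset.sum_le_sum fun i _ => ?_
  simpa [hp, mul_comm (u i - _)] using sub_softThreshold_mul_le hα (u i) (z i)

section

variable {E : Type*} [NormedAddCommGroup E] [InnerProductSpace ℝ E] [CompleteSpace E]
  {f : E → ℝ}

lemma hasDerivAt_comp_add_smul (hf : Differentiable ℝ f) (y v : E) (t : ℝ) :
    HasDerivAt (fun s : ℝ => f (y + s • v)) (inner ℝ (gradient f (y + t • v)) v) t := by
  have hline : HasDerivAt (fun s : ℝ => y + s • v) v t := by
    simpa using ((hasDerivAt_id t).smul_const v).const_add y
  exact ((hf _).hasGradientAt.hasFDerivAt.comp_hasDerivAt t hline).congr_deriv (by simp)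

lemma ConvexOn.add_inner_gradient_le (hconv : ConvexOn ℝ Set.univ f) (hf : Differentiable ℝ f)
    (y z : E) : f y + inner ℝ (gradient f y) (z - y) ≤ f z := by
  have hline : ConvexOn ℝ Set.univ fun t : ℝ => f (y + t • (z - y)) := by
    simpa [Function.comp_def, AffineMap.lineMap_apply_module', add_comm] using
      hconv.comp_affineMap (AffineMap.lineMap y z)
  have := hline.le_slope_of_hasDerivAt (Set.mem_univ 0) (Set.mem_univ 1) one_pos
    (by simpa only [zero_smul, add_zero] using hasDerivAt_comp_add_smul hf y (z - y) 0)
  rw [slope_def_field] at this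
  simp only [zero_smul, add_zero, one_smul, add_sub_cancel, sub_zero, div_one] at this
  linarith

lemma le_add_inner_gradient_add_sq {L : ℝ} (hf : Differentiable ℝ f)
    (hlip : ∀ w₁ w₂ : E, ‖gradient f w₂ - gradient f w₁‖ ≤ L * ‖w₂ - w₁‖) (y x : E) :
    f x ≤ f y + inner ℝ (gradient f y) (x - y) + L / 2 * ‖x - y‖ ^ 2 := by
  set v := x - y
  have hbound : ∀ t ∈ Set.Ico (0 : ℝ) 1,
      inner ℝ (gradient f (y + t • v)) v ≤ inner ℝ (gradient f y) v + L * ‖v‖ ^ 2 * t := by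
    intro t ht
    have hgrad := hlip y (y + t • v)
    rw [add_sub_cancel_left, norm_smul, Real.norm_eq_abs, abs_of_nonneg ht.1] at hgrad
    calc inner ℝ (gradient f (y + t • v)) v
        = inner ℝ (gradient f y) v + inner ℝ (gradient f (y + t • v) - gradient f y) v := by
          rw [inner_sub_left]; ring
      _ ≤ inner ℝ (gradient f y) v + L * (t * ‖v‖) * ‖v‖ := by
          gcongr
          exact (real_inner_le_norm _ _).trans (mul_le_mul_of_nonneg_right hgrad (norm_nonneg v))
      _ = _ := by ring
  -- `t ↦ f (y + t • v)` starts at the value of this quadratic majorant and grows no faster.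
  have hmajorant : ∀ t, HasDerivAt
      (fun t => f y + t * inner ℝ (gradient f y) v + L / 2 * ‖v‖ ^ 2 * t ^ 2)
      (inner ℝ (gradient f y) v + L * ‖v‖ ^ 2 * t) t := fun t =>
    ((((hasDerivAt_id' t).mul_const _).const_add _).add
      ((hasDerivAt_pow 2 t).const_mul _)).congr_deriv (by norm_num; ring)
  have := image_le_of_deriv_right_le_deriv_boundary
    (fun t _ => (hasDerivAt_comp_add_smul hf y v t).continuousAt.continuousWithinAt)
    (fun t _ => (hasDerivAt_comp_add_smul hf y v t).hasDerivWithinAt)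
    (by simp) (by fun_prop) (fun t _ => (hmajorant t).hasDerivWithinAt) hbound
    (Set.right_mem_Icc.2 zero_le_one)
  simpa [v] using this

/-- `p` is a proximal-gradient step of `f + g` from `y` with step `1 / L`: the vector
`L • (y - p) - ∇f y` is a subgradient of `g` at `p`. -/
def IsProxGradStep (f g : E → ℝ) (L : ℝ) (y p : E) : Prop :=
  ∀ z, inner ℝ (L • (y - p) - gradient f y) (z - p) ≤ g z - g p

lemma IsProxGradStep.add_le {g : E → ℝ} {L : ℝ} {y p : E} (hp : IsProxGradStep f g L y p)
    (hconv : ConvexOn ℝ Set.univ f) (hf : Differentiable ℝ f)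
    (hlip : ∀ w₁ w₂ : E, ‖gradient f w₂ - gradient f w₁‖ ≤ L * ‖w₂ - w₁‖) (z : E) :
    f p + g p ≤ f z + g z + L / 2 * (‖y - z‖ ^ 2 - ‖p - z‖ ^ 2) := by
  have hdescent := le_add_inner_gradient_add_sq hf hlip y p
  have hsupport := hconv.add_inner_gradient_le hf y z
  have hsubgrad := hp z
  have hnorm : ‖y - z‖ ^ 2 = ‖y - p‖ ^ 2 - 2 * inner ℝ (y - p) (z - p) + ‖z - p‖ ^ 2 := by
    rw [← norm_sub_sq_real, sub_sub_sub_cancel_right]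
  rw [inner_sub_left, real_inner_smul_left] at hsubgrad
  have hgrad : inner ℝ (gradient f y) (p - y) - inner ℝ (gradient f y) (z - y) +
      inner ℝ (gradient f y) (z - p) = 0 := by
    simp only [inner_sub_right]; ring
  rw [norm_sub_rev p y] at hdescent
  rw [norm_sub_rev p z, hnorm]
  linarith

end

lemma isProxGradStep_softThreshold {ι : Type*} [Fintype ι] {f : EuclideanSpace ℝ ι → ℝ}
    {L β : ℝ} (hL : 0 < L) (hβ : 0 ≤ β) {y p : EuclideanSpace ℝ ι}
    (hp : ∀ i, p i = softThreshold (β / L) ((y - (1 / L) • gradient f y) i)) :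
    IsProxGradStep f (fun v => β * ∑ i, |v i|) L y p := by
  intro z
  have hsmul : L • (y - p) - gradient f y = L • (y - (1 / L) • gradient f y - p) := by
    simp only [smul_sub, smul_smul, mul_one_div_cancel hL.ne', one_smul]
    abel
  rw [hsmul, real_inner_smul_left]
  calc L * inner ℝ (y - (1 / L) • gradient f y - p) (z - p)
      ≤ L * (β / L * (∑ i, |z i| - ∑ i, |p i|)) :=
        mul_le_mul_of_nonneg_left (inner_sub_softThreshold_le (by positivity) hp z) hL.le
    _ = β * ∑ i, |z i| - β * ∑ i, |p i| := by field_simp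

lemma nat_mul_sub_add_sq_le {E : Type*} [SeminormedAddCommGroup E] {F : E → ℝ} {L : ℝ}
    (hL : 0 ≤ L) {w : ℕ → E}
    (hstep : ∀ k x, F (w (k + 1)) ≤ F x + L / 2 * (‖w k - x‖ ^ 2 - ‖w (k + 1) - x‖ ^ 2))
    (z : E) (k : ℕ) :
    k * (F (w k) - F z) + L / 2 * ‖w k - z‖ ^ 2 ≤ L / 2 * ‖w 0 - z‖ ^ 2 := by
  induction k with
  | zero => simp
  | succ k ih =>
    have hdecrease : F (w (k + 1)) ≤ F (w k) := by
      have := hstep k (w k)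
      rw [sub_self, norm_zero] at this
      linarith [mul_nonneg hL (sq_nonneg ‖w (k + 1) - w k‖)]
    have hz := hstep k z
    push_cast
    linarith [mul_le_mul_of_nonneg_left hdecrease k.cast_nonneg]

/-- ISTA convergence rate: for `f` convex, differentiable with `L`-Lipschitz gradient,
`F = f + β‖·‖₁` with global minimizer `w⋆`, the ISTA iterates with step `1/L` satisfy
`F(w_k) − F(w⋆) ≤ L‖w₀ − w⋆‖²/(2k)` for all `k ≥ 1`; in particular `F(w_k) → F(w⋆)`. -/
theorem ista_convergence_rate
    (n : ℕ) (f : EuclideanSpace ℝ (Fin n) → ℝ)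
    (hconv : ConvexOn ℝ Set.univ f) (hdiff : Differentiable ℝ f)
    (L : ℝ) (hL : 0 < L)
    (hlip : ∀ w₁ w₂ : EuclideanSpace ℝ (Fin n),
        ‖gradient f w₂ - gradient f w₁‖ ≤ L * ‖w₂ - w₁‖)
    (β : ℝ) (hβ : 0 ≤ β)
    (S : EuclideanSpace ℝ (Fin n) → EuclideanSpace ℝ (Fin n))
    (hS : ∀ (u : EuclideanSpace ℝ (Fin n)) (i : Fin n),
        S u i = Real.sign (u i) * max (|u i| - β / L) 0)
    (wstar : EuclideanSpace ℝ (Fin n))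
    (hmin : ∀ w : EuclideanSpace ℝ (Fin n),
        f wstar + β * ∑ i, |wstar i| ≤ f w + β * ∑ i, |w i|)
    (w : ℕ → EuclideanSpace ℝ (Fin n))
    (hrec : ∀ k : ℕ, w (k + 1) = S (w k - (1 / L) • gradient f (w k))) :
    (∀ k : ℕ, 1 ≤ k →
        (f (w k) + β * ∑ i, |w k i|) - (f wstar + β * ∑ i, |wstar i|)
          ≤ L * ‖w 0 - wstar‖ ^ 2 / (2 * k)) ∧
    Tendsto (fun k : ℕ => f (w k) + β * ∑ i, |w k i|) atTop
      (nhds (f wstar + β * ∑ i, |wstar i|)) := by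
  set F : EuclideanSpace ℝ (Fin n) → ℝ := fun v => f v + β * ∑ i, |v i|
  have hstep : ∀ k x, F (w (k + 1)) ≤ F x + L / 2 * (‖w k - x‖ ^ 2 - ‖w (k + 1) - x‖ ^ 2) :=
    fun k x => (isProxGradStep_softThreshold hL hβ fun i => (hrec k ▸ hS _ i :)).add_le
      hconv hdiff hlip x
  have hrate : ∀ k : ℕ, 1 ≤ k → F (w k) - F wstar ≤ L * ‖w 0 - wstar‖ ^ 2 / (2 * k) := by
    intro k hk
    have hk : (0 : ℝ) < k := by exact_mod_cast hk
    rw [le_div_iff₀ (by positivity)]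
    linarith [nat_mul_sub_add_sq_le hL.le hstep wstar k,
      mul_nonneg hL.le (sq_nonneg ‖w k - wstar‖)]
  have hbound_lim : Tendsto (fun k : ℕ => L * ‖w 0 - wstar‖ ^ 2 / (2 * k)) atTop (nhds 0) := by
    refine (tendsto_const_div_atTop_nhds_zero_nat (L * ‖w 0 - wstar‖ ^ 2 / 2)).congr fun k => ?_
    rw [div_div]
  refine ⟨hrate, tendsto_sub_nhds_zero_iff.1 (squeeze_zero' ?_ ?_ hbound_lim)⟩
  · exact Eventually.of_forall fun k => sub_nonneg.2 (hmin (w k))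
  · exact (eventually_ge_atTop 1).mono hrate
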